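/- arXiv:1001.4588 — 2 statements merged into one kernel-verified Lean document; each statement's English description precedes it below -/
import Mathlib

section
/- Let Q, X, S be finite-valued random variables such that X and S are conditionally independent given Q, let g be a function on the alphabet of X, and let Y = f(g(X), S) where f is one-to-one in each argument. Then I(X;Y|S,Q) = H(g(X)|Q). -/
open scoped Classical
open Finset

/-- A probability mass function on a finite sample space, given as a real-valued
weight function that is nonnegative and sums to one. -/
structure FinPMF (Ω : Type) where
  [fin : Fintype Ω]
  p : Ω → ℝ
  nonneg : ∀ ω, 0 ≤ p ω
  sum_one : ∑ ω, p ω = 1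

/-- Probability of an event. -/
noncomputable def prE {Ω : Type} (μ : FinPMF Ω) (E : Ω → Prop) : ℝ :=
  letI := μ.fin
  ∑ ω, if E ω then μ.p ω else 0

/-- Probability that the random variable `X` takes the value `x`. -/
noncomputable def prX {Ω α : Type} (μ : FinPMF Ω) (X : Ω → α) (x : α) : ℝ :=
  prE μ (fun ω => X ω = x)

/-- Shannon entropy (base 2) of a random variable on a finite probability space. -/
noncomputable def entH {Ω α : Type} (μ : FinPMF Ω) (X : Ω → α) : ℝ :=
  letI := μ.fin;
  -∑ x ∈ Finset.univ.image X, prX μ X x * Real.logb 2 (prX μ X x)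

/-- Conditional entropy `H(X | Y)` (base 2). -/
noncomputable def condH {Ω α β : Type} (μ : FinPMF Ω) (X : Ω → α) (Y : Ω → β) : ℝ :=
  entH μ (fun ω => (X ω, Y ω)) - entH μ Y

/-- Conditional mutual information `I(X ; Y | Q)` (base 2). -/
noncomputable def condMI {Ω α β γ : Type} (μ : FinPMF Ω) (X : Ω → α) (Y : Ω → β)
    (Q : Ω → γ) : ℝ :=
  condH μ X Q + condH μ Y Q - condH μ (fun ω => (X ω, Y ω)) Q

/-- A two-argument function is one-to-one in each argument. -/
def OneToOne {A B C : Type} (f : A → B → C) : Prop :=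
  (∀ b, Function.Injective fun a => f a b) ∧ ∀ a, Function.Injective (f a)

/-- Conditional pmf `p_{X|U}(x|u)`. -/
noncomputable def condP {Ω α γ : Type} (μ : FinPMF Ω) (X : Ω → α) (U : Ω → γ)
    (x : α) (u : γ) : ℝ :=
  prE μ (fun ω => X ω = x ∧ U ω = u) / prX μ U u

/-- Independence of two random variables. -/
def IndepFun {Ω α β : Type} (μ : FinPMF Ω) (X : Ω → α) (S : Ω → β) : Prop :=
  ∀ x s, prE μ (fun ω => X ω = x ∧ S ω = s) = prX μ X x * prX μ S s

/-- Conditional independence of `A` and `B` given `Z`: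
for every `z` with `P(Z = z) > 0`, `P(A = a, B = b | Z = z) = P(A = a | Z = z) P(B = b | Z = z)`. -/
def CondIndepFun {Ω α β γ : Type} (μ : FinPMF Ω) (A : Ω → α) (B : Ω → β) (Z : Ω → γ) : Prop :=
  ∀ a b z, 0 < prX μ Z z →
    prE μ (fun ω => A ω = a ∧ B ω = b ∧ Z ω = z) / prX μ Z z =
      (prE μ (fun ω => A ω = a ∧ Z ω = z) / prX μ Z z) *
        (prE μ (fun ω => B ω = b ∧ Z ω = z) / prX μ Z z)

/-- Mutual conditional independence of `X₁, X₂, X₃` given `Q`: the joint conditional pmf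
factors into the product of the conditional marginals. -/
def CondIndepFun3 {Ω α₁ α₂ α₃ γ : Type} (μ : FinPMF Ω)
    (X₁ : Ω → α₁) (X₂ : Ω → α₂) (X₃ : Ω → α₃) (Q : Ω → γ) : Prop :=
  ∀ x₁ x₂ x₃ q, 0 < prX μ Q q →
    prE μ (fun ω => X₁ ω = x₁ ∧ X₂ ω = x₂ ∧ X₃ ω = x₃ ∧ Q ω = q) / prX μ Q q =
      (prE μ (fun ω => X₁ ω = x₁ ∧ Q ω = q) / prX μ Q q) *
        (prE μ (fun ω => X₂ ω = x₂ ∧ Q ω = q) / prX μ Q q) *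
        (prE μ (fun ω => X₃ ω = x₃ ∧ Q ω = q) / prX μ Q q)

/-- The ε-typical set (sequences whose empirical pmf is within a relative ε of `p`). -/
def Typical {𝒳 : Type} [Fintype 𝒳] (p : 𝒳 → ℝ) (ε : ℝ) (n : ℕ) (xs : Fin n → 𝒳) : Prop :=
  ∀ x : 𝒳, |((Finset.univ.filter fun i => xs i = x).card : ℝ) / n - p x| ≤ ε * p x

/-- The number of codewords `⌈2^{nR}⌉` at rate `R` and blocklength `n`. -/
noncomputable def codeSize (R : ℝ) (n : ℕ) : ℕ := ⌈(2 : ℝ) ^ ((n : ℝ) * R)⌉₊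

section Helpers

variable {Ω : Type} (μ : FinPMF Ω)

lemma prE_nonneg (E : Ω → Prop) : 0 ≤ prE μ E := by
  unfold prE
  apply Finset.sum_nonneg
  intro ω _
  by_cases h : E ω <;> simp [h, μ.nonneg ω]

lemma prE_congr {E F : Ω → Prop} (h : ∀ ω, E ω ↔ F ω) : prE μ E = prE μ F := by
  unfold prE
  apply Finset.sum_congr rfl
  intro ω _
  simp [h ω]

lemma prE_mono {E F : Ω → Prop} (h : ∀ ω, E ω → F ω) : prE μ E ≤ prE μ F := by
  unfold prE
  apply Finset.sum_le_sum
  intro ω _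
  by_cases hE : E ω
  · simp [hE, h ω hE]
  · simp only [hE, if_false]
    by_cases hF : F ω <;> simp [hF, μ.nonneg ω]

lemma prE_sum_fiber {α : Type} [Fintype α] (Z : Ω → α) (E : Ω → Prop) :
    ∑ z, prE μ (fun ω => Z ω = z ∧ E ω) = prE μ E := by
  unfold prE
  letI := μ.fin
  rw [Finset.sum_comm]
  apply Finset.sum_congr rfl
  intro ω _
  by_cases hE : E ω <;> simp [hE]

lemma entH_eq_univ {α : Type} [Fintype α] (X : Ω → α) :
    entH μ X = -∑ x, prX μ X x * Real.logb 2 (prX μ X x) := by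
  unfold entH
  letI := μ.fin
  congr 1
  apply Finset.sum_subset (Finset.subset_univ _)
  intro x _ hx
  have hz : prX μ X x = 0 := by
    unfold prX prE
    apply Finset.sum_eq_zero
    intro ω _
    have : X ω ≠ x := fun h => hx (Finset.mem_image.2 ⟨ω, Finset.mem_univ ω, h⟩)
    simp [this]
  simp [hz]

lemma entH_comp_inj {α β : Type} [Fintype α] [Fintype β] (X : Ω → α) (φ : α → β)
    (hφ : Function.Injective φ) :
    entH μ (fun ω => φ (X ω)) = entH μ X := by
  rw [entH_eq_univ, entH_eq_univ]
  have key : ∀ x, prX μ (fun ω => φ (X ω)) (φ x) = prX μ X x := by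
    intro x
    exact prE_congr μ fun ω => ⟨fun h => hφ h, fun h => congrArg φ h⟩
  have h0 : ∀ y ∈ (Finset.univ : Finset β), y ∉ Finset.univ.image φ →
      prX μ (fun ω => φ (X ω)) y * Real.logb 2 (prX μ (fun ω => φ (X ω)) y) = 0 := by
    intro y _ hy
    have hz : prX μ (fun ω => φ (X ω)) y = 0 := by
      unfold prX prE
      apply Finset.sum_eq_zero
      intro ω _
      have : φ (X ω) ≠ y := fun h => hy (Finset.mem_image.2 ⟨X ω, Finset.mem_univ _, h⟩)
      simp [this]
    simp [hz]
  rw [← Finset.sum_subset (Finset.subset_univ (Finset.univ.image φ)) h0,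
    Finset.sum_image (fun x _ y _ h => hφ h)]
  simp only [key]

/-- Abstract version of `H(A,S,Q) + H(Q) = H(A,Q) + H(S,Q)` for conditionally
independent coordinates, stated purely for real-valued functions. -/
lemma sum_mul_logb_identity {α β γ : Type} [Fintype α] [Fintype β] [Fintype γ]
    (p3 : α → β → γ → ℝ) (pA : α → γ → ℝ) (pS : β → γ → ℝ) (pQ : γ → ℝ)
    (nn : ∀ a s q, 0 ≤ p3 a s q)
    (bA : ∀ a s q, p3 a s q ≤ pA a q)
    (bS : ∀ a s q, p3 a s q ≤ pS s q)
    (bQ : ∀ a s q, p3 a s q ≤ pQ q)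
    (m1 : ∀ a q, ∑ s, p3 a s q = pA a q)
    (m2 : ∀ s q, ∑ a, p3 a s q = pS s q)
    (m3 : ∀ q, ∑ a, pA a q = pQ q)
    (fac : ∀ a s q, p3 a s q * pQ q = pA a q * pS s q) :
    (∑ a, ∑ s, ∑ q, p3 a s q * Real.logb 2 (p3 a s q)) + ∑ q, pQ q * Real.logb 2 (pQ q)
      = (∑ a, ∑ q, pA a q * Real.logb 2 (pA a q))
        + ∑ s, ∑ q, pS s q * Real.logb 2 (pS s q) := by
  have key : ∑ a, ∑ s, ∑ q, p3 a s q * Real.logb 2 (p3 a s q)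
      = ∑ a, ∑ s, ∑ q, p3 a s q *
        (Real.logb 2 (pA a q) + Real.logb 2 (pS s q) - Real.logb 2 (pQ q)) := by
    apply Finset.sum_congr rfl; intro a _
    apply Finset.sum_congr rfl; intro s _
    apply Finset.sum_congr rfl; intro q _
    rcases lt_or_eq_of_le (nn a s q) with hpos | hz
    · have hQ : 0 < pQ q := lt_of_lt_of_le hpos (bQ a s q)
      have hA : 0 < pA a q := lt_of_lt_of_le hpos (bA a s q)
      have hS : 0 < pS s q := lt_of_lt_of_le hpos (bS a s q)
      have hval : p3 a s q = pA a q * pS s q / pQ q := by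
        rw [eq_div_iff (ne_of_gt hQ)]
        exact fac a s q
      rw [hval, Real.logb_div (by positivity) (ne_of_gt hQ),
        Real.logb_mul (ne_of_gt hA) (ne_of_gt hS)]
    · rw [← hz]
      ring
  rw [key]
  have split1 : ∑ a, ∑ s, ∑ q, p3 a s q * Real.logb 2 (pA a q)
      = ∑ a, ∑ q, pA a q * Real.logb 2 (pA a q) := by
    apply Finset.sum_congr rfl; intro a _
    rw [Finset.sum_comm]
    apply Finset.sum_congr rfl; intro q _
    rw [← Finset.sum_mul, m1]
  have split2 : ∑ a, ∑ s, ∑ q, p3 a s q * Real.logb 2 (pS s q)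
      = ∑ s, ∑ q, pS s q * Real.logb 2 (pS s q) := by
    rw [Finset.sum_comm]
    apply Finset.sum_congr rfl; intro s _
    rw [Finset.sum_comm]
    apply Finset.sum_congr rfl; intro q _
    rw [← Finset.sum_mul, m2]
  have split3 : ∑ a, ∑ s, ∑ q, p3 a s q * Real.logb 2 (pQ q)
      = ∑ q, pQ q * Real.logb 2 (pQ q) := by
    have hstep : ∀ a, ∑ s, ∑ q, p3 a s q * Real.logb 2 (pQ q)
        = ∑ q, pA a q * Real.logb 2 (pQ q) := by
      intro a
      rw [Finset.sum_comm]
      apply Finset.sum_congr rfl; intro q _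
      rw [← Finset.sum_mul, m1]
    rw [Finset.sum_congr rfl fun a _ => hstep a, Finset.sum_comm]
    apply Finset.sum_congr rfl; intro q _
    rw [← Finset.sum_mul, m3]
  simp only [mul_add, mul_sub, Finset.sum_add_distrib, Finset.sum_sub_distrib]
  rw [split1, split2, split3]
  ring

lemma entH_add_of_condIndep {α β γ : Type} [Fintype α] [Fintype β] [Fintype γ]
    (A : Ω → α) (S : Ω → β) (Q : Ω → γ) (h : CondIndepFun μ A S Q) :
    entH μ (fun ω => (A ω, (S ω, Q ω))) + entH μ Q
      = entH μ (fun ω => (A ω, Q ω)) + entH μ (fun ω => (S ω, Q ω)) := by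
  classical
  have m1 : ∀ (a : α) (q : γ),
      ∑ s, prE μ (fun ω => A ω = a ∧ S ω = s ∧ Q ω = q)
        = prE μ (fun ω => A ω = a ∧ Q ω = q) := by
    intro a q
    rw [← prE_sum_fiber μ S (fun ω => A ω = a ∧ Q ω = q)]
    exact Finset.sum_congr rfl fun s _ => prE_congr μ fun ω => by tauto
  have m2 : ∀ (s : β) (q : γ),
      ∑ a, prE μ (fun ω => A ω = a ∧ S ω = s ∧ Q ω = q)
        = prE μ (fun ω => S ω = s ∧ Q ω = q) := by
    intro s q
    rw [← prE_sum_fiber μ A (fun ω => S ω = s ∧ Q ω = q)]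
  have m3 : ∀ q : γ, ∑ a, prE μ (fun ω => A ω = a ∧ Q ω = q) = prX μ Q q :=
    fun q => prE_sum_fiber μ A (fun ω => Q ω = q)
  have fac : ∀ a s q, prE μ (fun ω => A ω = a ∧ S ω = s ∧ Q ω = q) * prX μ Q q
      = prE μ (fun ω => A ω = a ∧ Q ω = q) * prE μ (fun ω => S ω = s ∧ Q ω = q) := by
    intro a s q
    rcases lt_or_eq_of_le (prE_nonneg μ (fun ω => Q ω = q)) with hq | hq
    · have hq' : prX μ Q q ≠ 0 := ne_of_gt hq
      have hh := h a s q hq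
      calc prE μ (fun ω => A ω = a ∧ S ω = s ∧ Q ω = q) * prX μ Q q
          = (prE μ (fun ω => A ω = a ∧ S ω = s ∧ Q ω = q) / prX μ Q q)
            * prX μ Q q * prX μ Q q := by field_simp
        _ = ((prE μ (fun ω => A ω = a ∧ Q ω = q) / prX μ Q q)
            * (prE μ (fun ω => S ω = s ∧ Q ω = q) / prX μ Q q))
            * prX μ Q q * prX μ Q q := by rw [hh]
        _ = prE μ (fun ω => A ω = a ∧ Q ω = q)
            * prE μ (fun ω => S ω = s ∧ Q ω = q) := by field_simp; try ring
    · have h1 : prE μ (fun ω => A ω = a ∧ S ω = s ∧ Q ω = q) = 0 :=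
        le_antisymm (le_trans (prE_mono μ (by tauto)) hq.symm.le) (prE_nonneg μ _)
      have h2 : prE μ (fun ω => A ω = a ∧ Q ω = q) = 0 :=
        le_antisymm (le_trans (prE_mono μ (by tauto)) hq.symm.le) (prE_nonneg μ _)
      rw [h1, h2]
      ring
  have eASQ : entH μ (fun ω => (A ω, (S ω, Q ω)))
      = -∑ a, ∑ s, ∑ q, prE μ (fun ω => A ω = a ∧ S ω = s ∧ Q ω = q)
          * Real.logb 2 (prE μ (fun ω => A ω = a ∧ S ω = s ∧ Q ω = q)) := by
    rw [entH_eq_univ, Fintype.sum_prod_type]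
    congr 1
    apply Finset.sum_congr rfl; intro a _
    rw [Fintype.sum_prod_type]
    apply Finset.sum_congr rfl; intro s _
    apply Finset.sum_congr rfl; intro q _
    have hp : prX μ (fun ω => (A ω, (S ω, Q ω))) (a, (s, q))
        = prE μ (fun ω => A ω = a ∧ S ω = s ∧ Q ω = q) := by
      apply prE_congr μ
      intro ω
      simp [Prod.ext_iff, and_assoc]
    rw [hp]
  have eAQ : entH μ (fun ω => (A ω, Q ω))
      = -∑ a, ∑ q, prE μ (fun ω => A ω = a ∧ Q ω = q)
          * Real.logb 2 (prE μ (fun ω => A ω = a ∧ Q ω = q)) := by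
    rw [entH_eq_univ, Fintype.sum_prod_type]
    congr 1
    apply Finset.sum_congr rfl; intro a _
    apply Finset.sum_congr rfl; intro q _
    have hp : prX μ (fun ω => (A ω, Q ω)) (a, q)
        = prE μ (fun ω => A ω = a ∧ Q ω = q) := by
      apply prE_congr μ; intro ω; simp [Prod.ext_iff]
    rw [hp]
  have eSQ : entH μ (fun ω => (S ω, Q ω))
      = -∑ s, ∑ q, prE μ (fun ω => S ω = s ∧ Q ω = q)
          * Real.logb 2 (prE μ (fun ω => S ω = s ∧ Q ω = q)) := by
    rw [entH_eq_univ, Fintype.sum_prod_type]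
    congr 1
    apply Finset.sum_congr rfl; intro s _
    apply Finset.sum_congr rfl; intro q _
    have hp : prX μ (fun ω => (S ω, Q ω)) (s, q)
        = prE μ (fun ω => S ω = s ∧ Q ω = q) := by
      apply prE_congr μ; intro ω; simp [Prod.ext_iff]
    rw [hp]
  have eQ : entH μ Q = -∑ q, prX μ Q q * Real.logb 2 (prX μ Q q) := entH_eq_univ μ Q
  rw [eASQ, eAQ, eSQ, eQ]
  have main := sum_mul_logb_identity
    (fun a s q => prE μ (fun ω => A ω = a ∧ S ω = s ∧ Q ω = q))
    (fun a q => prE μ (fun ω => A ω = a ∧ Q ω = q))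
    (fun s q => prE μ (fun ω => S ω = s ∧ Q ω = q))
    (fun q => prX μ Q q)
    (fun a s q => prE_nonneg μ _)
    (fun a s q => prE_mono μ (by tauto))
    (fun a s q => prE_mono μ (by tauto))
    (fun a s q => prE_mono μ (by tauto))
    m1 m2 m3 fac
  linarith [main]

end Helpers
/-- `I(X;Y|S,Q) = H(g(X)|Q)` where `Y = f(g(X), S)`. -/
theorem condMI_given_S_eq_condH_g
    {Ω 𝒬 𝒳 𝒳' 𝒮 𝒴 : Type} [Fintype 𝒬] [Nonempty 𝒬] [Fintype 𝒳] [Nonempty 𝒳]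
    [Fintype 𝒳'] [Nonempty 𝒳'] [Fintype 𝒮] [Nonempty 𝒮] [Fintype 𝒴] [Nonempty 𝒴]
    (μ : FinPMF Ω) (Q : Ω → 𝒬) (X : Ω → 𝒳) (S : Ω → 𝒮)
    (g : 𝒳 → 𝒳') (f : 𝒳' → 𝒮 → 𝒴)
    (hindep : CondIndepFun μ X S Q)
    (hf : OneToOne f) :
    condMI μ X (fun ω => f (g (X ω)) (S ω)) (fun ω => (S ω, Q ω)) =
      condH μ (fun ω => g (X ω)) Q := by

  have hYX : entH μ (fun ω => ((X ω, f (g (X ω)) (S ω)), (S ω, Q ω)))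
      = entH μ (fun ω => (X ω, (S ω, Q ω))) := by
    have hinj : Function.Injective
        (fun p : 𝒳 × (𝒮 × 𝒬) => ((p.1, f (g p.1) p.2.1), p.2)) := by
      intro p p' hpp
      simp only [Prod.ext_iff] at hpp
      exact Prod.ext hpp.1.1 (Prod.ext hpp.2.1 hpp.2.2)
    exact entH_comp_inj μ (fun ω => (X ω, (S ω, Q ω))) _ hinj
  have hY : entH μ (fun ω => (f (g (X ω)) (S ω), (S ω, Q ω)))
      = entH μ (fun ω => (g (X ω), (S ω, Q ω))) := by
    have hinj : Function.Injective
        (fun p : 𝒳' × (𝒮 × 𝒬) => (f p.1 p.2.1, p.2)) := by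
      intro p p' hpp
      simp only [Prod.ext_iff] at hpp
      obtain ⟨h1, h2, h3⟩ := hpp
      have hs : p.2.1 = p'.2.1 := h2
      rw [← hs] at h1
      exact Prod.ext (hf.1 p.2.1 h1) (Prod.ext h2 h3)
    exact entH_comp_inj μ (fun ω => (g (X ω), (S ω, Q ω))) _ hinj
  have hgind : CondIndepFun μ (fun ω => g (X ω)) S Q := by
    intro a s q hq
    have expand : ∀ (E : Ω → Prop), prE μ (fun ω => g (X ω) = a ∧ E ω)
        = ∑ x, prE μ (fun ω => X ω = x ∧ g (X ω) = a ∧ E ω) :=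
      fun E => (prE_sum_fiber μ X (fun ω => g (X ω) = a ∧ E ω)).symm
    have step : ∀ (x : 𝒳) (E : Ω → Prop), prE μ (fun ω => X ω = x ∧ g (X ω) = a ∧ E ω)
        = if g x = a then prE μ (fun ω => X ω = x ∧ E ω) else 0 := by
      intro x E
      by_cases hx : g x = a
      · simp only [hx, if_true]
        apply prE_congr μ
        intro ω
        constructor
        · tauto
        · rintro ⟨h1, h2⟩
          exact ⟨h1, by rw [h1, hx], h2⟩
      · simp only [hx, if_false]
        unfold prE
        apply Finset.sum_eq_zero
        intro ω _
        have hne : ¬(X ω = x ∧ g (X ω) = a ∧ E ω) := by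
          rintro ⟨h1, h2, _⟩; rw [h1] at h2; exact hx h2
        simp [hne]
    rw [expand (fun ω => S ω = s ∧ Q ω = q), expand (fun ω => Q ω = q)]
    rw [Finset.sum_congr rfl fun x _ => step x (fun ω => S ω = s ∧ Q ω = q),
      Finset.sum_congr rfl fun x _ => step x (fun ω => Q ω = q)]
    rw [Finset.sum_div, Finset.sum_div, Finset.sum_mul]
    apply Finset.sum_congr rfl
    intro x _
    by_cases hx : g x = a
    · simp only [hx, if_true]
      rw [hindep x s q hq]
    · simp [hx]
  have hchain := entH_add_of_condIndep μ (fun ω => g (X ω)) S Q hgind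
  unfold condMI condH
  linarith [hYX, hY, hchain]
end

section
/- (Single-letter sum-rate converse bound.) Let Q, X₁, X₂, X₃ be finite-valued random variables with X₁, X₂, X₃ mutually conditionally independent given Q. For l, k ∈ {1,2,3}, let X_{lk} = g_{lk}(X_l) for arbitrary functions g_{lk}; let S₁ = h₁(X₂₁,X₃₁), S₂ = h₂(X₁₂,X₃₂), S₃ = h₃(X₁₃,X₂₃) with h₁, h₂, h₃ one-to-one in each argument; and let Y_k = f_k(X_{kk},S_k) with f₁, f₂, f₃ one-to-one in each argument. Assume the invertibility conditions H(S₁|Q) = H(X₂₁|Q)+H(X₃₁|Q), H(S₂|Q) = H(X₁₂|Q)+H(X₃₂|Q), H(S₃|Q) = H(X₁₃|Q)+H(X₂₃|Q), and the strong-interference conditions H(X₂₂|Q) ≤ H(X₂₁|Q) and H(X₃₃|Q) ≤ H(X₃₁|Q). Then I(X₁;Y₁|Q) + I(X₂;Y₂|Q) + I(X₃;Y₃|Q) ≤ H(Y₁|Q). -/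
open scoped Classical
open Finset

/-!
Given `X₁`, the output `Y₁ = f₁(X₁₁, S₁)` determines `S₁`, and `S₁` is conditionally independent
of `X₁`, so `I(X₁;Y₁|Q) = H(Y₁|Q) - H(S₁|Q)`. For `k = 2, 3` the same identity holds, and since
`Y_k` is a function of the conditionally independent pair `(X_kk, S_k)`, it gives
`I(X_k;Y_k|Q) ≤ H(X_kk|Q)`. Strong interference bounds `H(X₂₂|Q) + H(X₃₃|Q)` by
`H(X₂₁|Q) + H(X₃₁|Q)`, which is `H(S₁|Q)` by invertibility, and the three bounds add up.
-/

namespace FinPMF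

variable {Ω : Type} (μ : FinPMF Ω)

lemma prE_nonneg (E : Ω → Prop) : 0 ≤ prE μ E :=
  let _ := μ.fin
  Finset.sum_nonneg fun ω _ => by split <;> simp [μ.nonneg ω]

lemma prE_congr {E F : Ω → Prop} (h : ∀ ω, E ω ↔ F ω) : prE μ E = prE μ F := by
  simp only [prE, h]

lemma prE_mono {E F : Ω → Prop} (h : ∀ ω, E ω → F ω) : prE μ E ≤ prE μ F :=
  let _ := μ.fin
  Finset.sum_le_sum fun ω _ => by
    by_cases hE : E ω
    · simp [hE, h ω hE]
    · simp only [hE, if_false]; split <;> simp [μ.nonneg ω]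

lemma p_le_prE {E : Ω → Prop} {ω : Ω} (h : E ω) : μ.p ω ≤ prE μ E := by
  let _ := μ.fin
  simpa [h, prE] using Finset.single_le_sum (f := fun ω' => if E ω' then μ.p ω' else 0)
    (fun ω' _ => by split <;> simp [μ.nonneg ω']) (Finset.mem_univ ω)

lemma exists_finset_forall_mem {α : Type} (μ : FinPMF Ω) (A : Ω → α) :
    ∃ s : Finset α, ∀ ω, A ω ∈ s :=
  let _ := μ.fin
  ⟨Finset.univ.image A, fun ω => Finset.mem_image_of_mem A (Finset.mem_univ ω)⟩

lemma sum_prE_and_eq {α : Type} {A : Ω → α} {s : Finset α} (hs : ∀ ω, A ω ∈ s)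
    (C : α → Prop) (P : Ω → Prop) :
    ∑ x ∈ s with C x, prE μ (fun ω => A ω = x ∧ P ω) = prE μ (fun ω => C (A ω) ∧ P ω) := by
  let _ := μ.fin
  simp only [prE]
  rw [Finset.sum_comm]
  refine Finset.sum_congr rfl fun ω _ => ?_
  by_cases hC : C (A ω) <;> by_cases hP : P ω <;> simp [hC, hP, hs ω, Finset.sum_ite_eq]

lemma sum_prE_eq {α : Type} {A : Ω → α} {s : Finset α} (hs : ∀ ω, A ω ∈ s)
    (P : Ω → Prop) : ∑ x ∈ s, prE μ (fun ω => A ω = x ∧ P ω) = prE μ P := by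
  simpa using μ.sum_prE_and_eq hs (fun _ => True) P

lemma prE_and_eq_zero {γ : Type} {Q : Ω → γ} {q : γ} (hq : prX μ Q q = 0) (E : Ω → Prop) :
    prE μ (fun ω => E ω ∧ Q ω = q) = 0 :=
  le_antisymm (hq ▸ μ.prE_mono fun _ h => h.2) (μ.prE_nonneg _)

end FinPMF

section CondIndep

variable {Ω α β γ : Type} {μ : FinPMF Ω} {A : Ω → α} {B : Ω → β} {Q : Ω → γ}

lemma CondIndepFun.mul_eq (h : CondIndepFun μ A B Q) (a : α) (b : β) (q : γ) :
    prE μ (fun ω => A ω = a ∧ B ω = b ∧ Q ω = q) * prX μ Q q =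
      prE μ (fun ω => A ω = a ∧ Q ω = q) * prE μ (fun ω => B ω = b ∧ Q ω = q) := by
  rcases (μ.prE_nonneg _ : 0 ≤ prX μ Q q).eq_or_lt with hq | hq
  · simp [prX, ← hq, μ.prE_and_eq_zero hq.symm]
  · have key := h a b q hq
    have hq' : prX μ Q q ≠ 0 := hq.ne'
    field_simp at key
    linear_combination key

lemma condIndepFun_of_mul_eq
    (h : ∀ a b q, 0 < prX μ Q q → prE μ (fun ω => A ω = a ∧ B ω = b ∧ Q ω = q) * prX μ Q q =
      prE μ (fun ω => A ω = a ∧ Q ω = q) * prE μ (fun ω => B ω = b ∧ Q ω = q)) :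
    CondIndepFun μ A B Q := by
  intro a b q hq
  rw [div_mul_div_comm, ← h a b q hq, mul_div_mul_right _ _ hq.ne']

lemma CondIndepFun.symm (h : CondIndepFun μ A B Q) : CondIndepFun μ B A Q :=
  condIndepFun_of_mul_eq fun b a q _ => by
    rw [μ.prE_congr fun ω => and_left_comm, h.mul_eq, mul_comm]

lemma CondIndepFun.comp_left {α' : Type} (h : CondIndepFun μ A B Q) (F : α → α') :
    CondIndepFun μ (fun ω => F (A ω)) B Q := by
  obtain ⟨s, hs⟩ := μ.exists_finset_forall_mem A
  refine condIndepFun_of_mul_eq fun a b q _ => ?_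
  rw [← μ.sum_prE_and_eq hs (fun x => F x = a), ← μ.sum_prE_and_eq hs (fun x => F x = a),
    Finset.sum_mul, Finset.sum_mul]
  exact Finset.sum_congr rfl fun x _ => h.mul_eq x b q

lemma CondIndepFun.comp_right {β' : Type} (h : CondIndepFun μ A B Q) (G : β → β') :
    CondIndepFun μ A (fun ω => G (B ω)) Q :=
  (h.symm.comp_left G).symm

lemma CondIndepFun3.rotate {α₃ : Type} {X₃ : Ω → α₃} (h : CondIndepFun3 μ A B X₃ Q) :
    CondIndepFun3 μ B X₃ A Q := by
  intro b x₃ a q hq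
  rw [μ.prE_congr (F := fun ω => A ω = a ∧ B ω = b ∧ X₃ ω = x₃ ∧ Q ω = q) (fun ω => by tauto),
    h a b x₃ q hq]
  ring

lemma CondIndepFun3.condIndepFun_pair {α₃ : Type} {X₃ : Ω → α₃}
    (h : CondIndepFun3 μ A B X₃ Q) : CondIndepFun μ A (fun ω => (B ω, X₃ ω)) Q := by
  obtain ⟨s, hs⟩ := μ.exists_finset_forall_mem A
  refine condIndepFun_of_mul_eq fun a ⟨b, x₃⟩ q hq => ?_
  have h3 : ∀ x, prE μ (fun ω => A ω = x ∧ B ω = b ∧ X₃ ω = x₃ ∧ Q ω = q) * prX μ Q q ^ 2 =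
      prE μ (fun ω => A ω = x ∧ Q ω = q) * prE μ (fun ω => B ω = b ∧ Q ω = q) *
        prE μ (fun ω => X₃ ω = x₃ ∧ Q ω = q) := fun x => by
    have key := h x b x₃ q hq
    have hq' : prX μ Q q ≠ 0 := hq.ne'
    field_simp at key
    linear_combination key
  -- marginalizing `A` out of `h3` gives the conditional independence of `B` and `X₃`
  have h23 : prE μ (fun ω => B ω = b ∧ X₃ ω = x₃ ∧ Q ω = q) * prX μ Q q =
      prE μ (fun ω => B ω = b ∧ Q ω = q) * prE μ (fun ω => X₃ ω = x₃ ∧ Q ω = q) := by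
    have hsum := Finset.sum_congr rfl fun x (_ : x ∈ s) => h3 x
    rw [← Finset.sum_mul, ← Finset.sum_mul, ← Finset.sum_mul, μ.sum_prE_eq hs,
      μ.sum_prE_eq hs] at hsum
    exact mul_left_cancel₀ hq.ne' (by unfold prX at hsum ⊢; linear_combination hsum)
  have hpair : ∀ E : Ω → Prop, prE μ (fun ω => E ω ∧ (B ω, X₃ ω) = (b, x₃) ∧ Q ω = q) =
      prE μ (fun ω => E ω ∧ B ω = b ∧ X₃ ω = x₃ ∧ Q ω = q) := fun E =>
    μ.prE_congr fun ω => by simp [Prod.ext_iff, and_assoc]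
  have h23' := hpair (fun _ => True)
  simp only [true_and] at h23'
  rw [hpair, h23']
  refine mul_right_cancel₀ hq.ne' ?_
  linear_combination h3 a - prE μ (fun ω => A ω = a ∧ Q ω = q) * h23

end CondIndep

section Entropy

variable {Ω α β γ : Type}

lemma entH_eq_neg_sum (μ : FinPMF Ω) (X : Ω → α) :
    entH μ X = letI := μ.fin; -∑ ω, μ.p ω * Real.logb 2 (prX μ X (X ω)) := by
  let _ := μ.fin
  have hfiber : ∀ x, prX μ X x * Real.logb 2 (prX μ X x) =
      ∑ ω, if X ω = x then μ.p ω * Real.logb 2 (prX μ X x) else 0 := fun x => by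
    rw [prX, prE, Finset.sum_mul]
    exact Finset.sum_congr rfl fun ω _ => by split <;> simp
  simp only [entH, Finset.sum_congr rfl fun x _ => hfiber x]
  rw [Finset.sum_comm]
  simp

lemma entH_comp_le (μ : FinPMF Ω) (X : Ω → α) (g : α → β) :
    entH μ (fun ω => g (X ω)) ≤ entH μ X := by
  let _ := μ.fin
  rw [entH_eq_neg_sum, entH_eq_neg_sum, neg_le_neg_iff]
  refine Finset.sum_le_sum fun ω _ => ?_
  rcases (μ.nonneg ω).eq_or_lt with hp | hp
  · simp [← hp]
  · exact mul_le_mul_of_nonneg_left (Real.logb_le_logb_of_le one_lt_two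
      (hp.trans_le (μ.p_le_prE rfl)) (μ.prE_mono fun _ h => congrArg g h)) hp.le

lemma entH_comp_of_injective (μ : FinPMF Ω) (X : Ω → α) {g : α → β}
    (hg : Function.Injective g) : entH μ (fun ω => g (X ω)) = entH μ X := by
  simp only [entH_eq_neg_sum, prX, hg.eq_iff]

lemma condH_comp_le (μ : FinPMF Ω) (X : Ω → α) (Q : Ω → γ) (g : α → β) :
    condH μ (fun ω => g (X ω)) Q ≤ condH μ X Q :=
  sub_le_sub_right (entH_comp_le μ (fun ω => (X ω, Q ω)) fun p => (g p.1, p.2)) _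

lemma condH_comp_of_injective (μ : FinPMF Ω) (X : Ω → α) (Q : Ω → γ) {g : α → β}
    (hg : Function.Injective g) : condH μ (fun ω => g (X ω)) Q = condH μ X Q := by
  rw [condH, condH, ← entH_comp_of_injective μ (fun ω => (X ω, Q ω))
    (hg.prodMap Function.injective_id)]
  rfl

lemma prX_prodMk (μ : FinPMF Ω) (A : Ω → α) (Q : Ω → γ) (a : α) (q : γ) :
    prX μ (fun ω => (A ω, Q ω)) (a, q) = prE μ (fun ω => A ω = a ∧ Q ω = q) :=
  μ.prE_congr fun _ => Prod.ext_iff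

variable {μ : FinPMF Ω} {A : Ω → α} {B : Ω → β} {Q : Ω → γ}

lemma CondIndepFun.condH_pair (h : CondIndepFun μ A B Q) :
    condH μ (fun ω => (A ω, B ω)) Q = condH μ A Q + condH μ B Q := by
  let _ := μ.fin
  suffices entH μ (fun ω => ((A ω, B ω), Q ω)) + entH μ Q =
      entH μ (fun ω => (A ω, Q ω)) + entH μ (fun ω => (B ω, Q ω)) by
    simp only [condH]; linarith
  simp only [entH_eq_neg_sum, ← neg_add, ← Finset.sum_add_distrib, ← mul_add, prX_prodMk]
  congr 1
  refine Finset.sum_congr rfl fun ω _ => ?_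
  rcases (μ.nonneg ω).eq_or_lt with hp | hp
  · simp [← hp]
  have hpos : ∀ {E : Ω → Prop}, E ω → 0 < prE μ E := fun hE => hp.trans_le (μ.p_le_prE hE)
  have habq : prE μ (fun ω' => (A ω', B ω') = (A ω, B ω) ∧ Q ω' = Q ω) =
      prE μ (fun ω' => A ω' = A ω ∧ B ω' = B ω ∧ Q ω' = Q ω) :=
    μ.prE_congr fun _ => by simp [Prod.ext_iff, and_assoc]
  have hQ : 0 < prX μ Q (Q ω) := hpos rfl
  rw [habq, ← Real.logb_mul (hpos ⟨rfl, rfl, rfl⟩).ne' hQ.ne',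
    ← Real.logb_mul (hpos ⟨rfl, rfl⟩).ne' (hpos ⟨rfl, rfl⟩).ne', h.mul_eq]

lemma CondIndepFun.condH_comp₂_le {υ : Type} (h : CondIndepFun μ A B Q) (F : α → β → υ) :
    condH μ (fun ω => F (A ω) (B ω)) Q ≤ condH μ A Q + condH μ B Q :=
  h.condH_pair ▸ condH_comp_le μ (fun ω => (A ω, B ω)) Q fun p => F p.1 p.2

lemma CondIndepFun.condMI_eq {υ : Type} (h : CondIndepFun μ A B Q) {F : α → β → υ}
    (hF : ∀ a, Function.Injective (F a)) :
    condMI μ A (fun ω => F (A ω) (B ω)) Q = condH μ (fun ω => F (A ω) (B ω)) Q - condH μ B Q := by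
  have hinj : Function.Injective fun p : α × β => (p.1, F p.1 p.2) := fun p p' hpp' => by
    simp only [Prod.mk.injEq] at hpp'
    exact Prod.ext hpp'.1 (hF p.1 (hpp'.1 ▸ hpp'.2))
  have hpair := condH_comp_of_injective μ (fun ω => (A ω, B ω)) Q hinj
  simp only [condMI] at hpair ⊢
  linarith [h.condH_pair]

lemma CondIndepFun.condMI_le {α' υ : Type} (h : CondIndepFun μ A B Q) (g : α → α')
    {f : α' → β → υ} (hf : ∀ a, Function.Injective (f a)) :
    condMI μ A (fun ω => f (g (A ω)) (B ω)) Q ≤ condH μ (fun ω => g (A ω)) Q := by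
  rw [h.condMI_eq fun a => hf (g a)]
  linarith [(h.comp_left g).condH_comp₂_le f]

end Entropy

theorem sum_rate_converse_bound_general
    {Ω 𝒬 𝒳₁ 𝒳₂ 𝒳₃ 𝒳₁₁ 𝒳₁₂ 𝒳₁₃ 𝒳₂₁ 𝒳₂₂ 𝒳₂₃ 𝒳₃₁ 𝒳₃₂ 𝒳₃₃ 𝒮₁ 𝒮₂ 𝒮₃ 𝒴₁ 𝒴₂ 𝒴₃ : Type}
    (μ : FinPMF Ω) (Q : Ω → 𝒬) (X₁ : Ω → 𝒳₁) (X₂ : Ω → 𝒳₂) (X₃ : Ω → 𝒳₃)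
    (g₁₁ : 𝒳₁ → 𝒳₁₁) (g₁₂ : 𝒳₁ → 𝒳₁₂) (g₁₃ : 𝒳₁ → 𝒳₁₃)
    (g₂₁ : 𝒳₂ → 𝒳₂₁) (g₂₂ : 𝒳₂ → 𝒳₂₂) (g₂₃ : 𝒳₂ → 𝒳₂₃)
    (g₃₁ : 𝒳₃ → 𝒳₃₁) (g₃₂ : 𝒳₃ → 𝒳₃₂) (g₃₃ : 𝒳₃ → 𝒳₃₃)
    (h₁ : 𝒳₂₁ → 𝒳₃₁ → 𝒮₁) (h₂ : 𝒳₁₂ → 𝒳₃₂ → 𝒮₂) (h₃ : 𝒳₁₃ → 𝒳₂₃ → 𝒮₃)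
    (f₁ : 𝒳₁₁ → 𝒮₁ → 𝒴₁) (f₂ : 𝒳₂₂ → 𝒮₂ → 𝒴₂) (f₃ : 𝒳₃₃ → 𝒮₃ → 𝒴₃)
    (hindep : CondIndepFun3 μ X₁ X₂ X₃ Q)
    (hf₁ : OneToOne f₁) (hf₂ : OneToOne f₂) (hf₃ : OneToOne f₃)
    (hinv₁ : condH μ (fun ω => h₁ (g₂₁ (X₂ ω)) (g₃₁ (X₃ ω))) Q =
      condH μ (fun ω => g₂₁ (X₂ ω)) Q + condH μ (fun ω => g₃₁ (X₃ ω)) Q)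
    (hstrong₂ : condH μ (fun ω => g₂₂ (X₂ ω)) Q ≤ condH μ (fun ω => g₂₁ (X₂ ω)) Q)
    (hstrong₃ : condH μ (fun ω => g₃₃ (X₃ ω)) Q ≤ condH μ (fun ω => g₃₁ (X₃ ω)) Q) :
    condMI μ X₁ (fun ω => f₁ (g₁₁ (X₁ ω)) (h₁ (g₂₁ (X₂ ω)) (g₃₁ (X₃ ω)))) Q +
        condMI μ X₂ (fun ω => f₂ (g₂₂ (X₂ ω)) (h₂ (g₁₂ (X₁ ω)) (g₃₂ (X₃ ω)))) Q +
        condMI μ X₃ (fun ω => f₃ (g₃₃ (X₃ ω)) (h₃ (g₁₃ (X₁ ω)) (g₂₃ (X₂ ω)))) Q ≤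
      condH μ (fun ω => f₁ (g₁₁ (X₁ ω)) (h₁ (g₂₁ (X₂ ω)) (g₃₁ (X₃ ω)))) Q := by
  have hS₁ : CondIndepFun μ X₁ (fun ω => h₁ (g₂₁ (X₂ ω)) (g₃₁ (X₃ ω))) Q :=
    hindep.condIndepFun_pair.comp_right fun p => h₁ (g₂₁ p.1) (g₃₁ p.2)
  have hS₂ : CondIndepFun μ X₂ (fun ω => h₂ (g₁₂ (X₁ ω)) (g₃₂ (X₃ ω))) Q :=
    hindep.rotate.condIndepFun_pair.comp_right fun p => h₂ (g₁₂ p.2) (g₃₂ p.1)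
  have hS₃ : CondIndepFun μ X₃ (fun ω => h₃ (g₁₃ (X₁ ω)) (g₂₃ (X₂ ω))) Q :=
    hindep.rotate.rotate.condIndepFun_pair.comp_right fun p => h₃ (g₁₃ p.1) (g₂₃ p.2)
  have hI₁ := hS₁.condMI_eq fun x => hf₁.2 (g₁₁ x)
  have hI₂ := hS₂.condMI_le g₂₂ hf₂.2
  have hI₃ := hS₃.condMI_le g₃₃ hf₃.2
  linarith

/-- Single-letter sum-rate converse bound. -/
theorem sum_rate_converse_bound
    {Ω 𝒬 𝒳₁ 𝒳₂ 𝒳₃ 𝒳₁₁ 𝒳₁₂ 𝒳₁₃ 𝒳₂₁ 𝒳₂₂ 𝒳₂₃ 𝒳₃₁ 𝒳₃₂ 𝒳₃₃ 𝒮₁ 𝒮₂ 𝒮₃ 𝒴₁ 𝒴₂ 𝒴₃ : Type}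
    [Fintype 𝒬] [Nonempty 𝒬]
    [Fintype 𝒳₁] [Nonempty 𝒳₁] [Fintype 𝒳₂] [Nonempty 𝒳₂] [Fintype 𝒳₃] [Nonempty 𝒳₃]
    [Fintype 𝒳₁₁] [Nonempty 𝒳₁₁] [Fintype 𝒳₁₂] [Nonempty 𝒳₁₂] [Fintype 𝒳₁₃] [Nonempty 𝒳₁₃]
    [Fintype 𝒳₂₁] [Nonempty 𝒳₂₁] [Fintype 𝒳₂₂] [Nonempty 𝒳₂₂] [Fintype 𝒳₂₃] [Nonempty 𝒳₂₃]
    [Fintype 𝒳₃₁] [Nonempty 𝒳₃₁] [Fintype 𝒳₃₂] [Nonempty 𝒳₃₂] [Fintype 𝒳₃₃] [Nonempty 𝒳₃₃]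
    [Fintype 𝒮₁] [Nonempty 𝒮₁] [Fintype 𝒮₂] [Nonempty 𝒮₂] [Fintype 𝒮₃] [Nonempty 𝒮₃]
    [Fintype 𝒴₁] [Nonempty 𝒴₁] [Fintype 𝒴₂] [Nonempty 𝒴₂] [Fintype 𝒴₃] [Nonempty 𝒴₃]
    (μ : FinPMF Ω) (Q : Ω → 𝒬) (X₁ : Ω → 𝒳₁) (X₂ : Ω → 𝒳₂) (X₃ : Ω → 𝒳₃)
    (g₁₁ : 𝒳₁ → 𝒳₁₁) (g₁₂ : 𝒳₁ → 𝒳₁₂) (g₁₃ : 𝒳₁ → 𝒳₁₃)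
    (g₂₁ : 𝒳₂ → 𝒳₂₁) (g₂₂ : 𝒳₂ → 𝒳₂₂) (g₂₃ : 𝒳₂ → 𝒳₂₃)
    (g₃₁ : 𝒳₃ → 𝒳₃₁) (g₃₂ : 𝒳₃ → 𝒳₃₂) (g₃₃ : 𝒳₃ → 𝒳₃₃)
    (h₁ : 𝒳₂₁ → 𝒳₃₁ → 𝒮₁) (h₂ : 𝒳₁₂ → 𝒳₃₂ → 𝒮₂) (h₃ : 𝒳₁₃ → 𝒳₂₃ → 𝒮₃)
    (f₁ : 𝒳₁₁ → 𝒮₁ → 𝒴₁) (f₂ : 𝒳₂₂ → 𝒮₂ → 𝒴₂) (f₃ : 𝒳₃₃ → 𝒮₃ → 𝒴₃)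
    (hindep : CondIndepFun3 μ X₁ X₂ X₃ Q)
    (hh₁ : OneToOne h₁) (hh₂ : OneToOne h₂) (hh₃ : OneToOne h₃)
    (hf₁ : OneToOne f₁) (hf₂ : OneToOne f₂) (hf₃ : OneToOne f₃)
    (hinv₁ : condH μ (fun ω => h₁ (g₂₁ (X₂ ω)) (g₃₁ (X₃ ω))) Q =
      condH μ (fun ω => g₂₁ (X₂ ω)) Q + condH μ (fun ω => g₃₁ (X₃ ω)) Q)
    (hinv₂ : condH μ (fun ω => h₂ (g₁₂ (X₁ ω)) (g₃₂ (X₃ ω))) Q =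
      condH μ (fun ω => g₁₂ (X₁ ω)) Q + condH μ (fun ω => g₃₂ (X₃ ω)) Q)
    (hinv₃ : condH μ (fun ω => h₃ (g₁₃ (X₁ ω)) (g₂₃ (X₂ ω))) Q =
      condH μ (fun ω => g₁₃ (X₁ ω)) Q + condH μ (fun ω => g₂₃ (X₂ ω)) Q)
    (hstrong₂ : condH μ (fun ω => g₂₂ (X₂ ω)) Q ≤ condH μ (fun ω => g₂₁ (X₂ ω)) Q)
    (hstrong₃ : condH μ (fun ω => g₃₃ (X₃ ω)) Q ≤ condH μ (fun ω => g₃₁ (X₃ ω)) Q) :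
    condMI μ X₁ (fun ω => f₁ (g₁₁ (X₁ ω)) (h₁ (g₂₁ (X₂ ω)) (g₃₁ (X₃ ω)))) Q +
        condMI μ X₂ (fun ω => f₂ (g₂₂ (X₂ ω)) (h₂ (g₁₂ (X₁ ω)) (g₃₂ (X₃ ω)))) Q +
        condMI μ X₃ (fun ω => f₃ (g₃₃ (X₃ ω)) (h₃ (g₁₃ (X₁ ω)) (g₂₃ (X₂ ω)))) Q ≤
      condH μ (fun ω => f₁ (g₁₁ (X₁ ω)) (h₁ (g₂₁ (X₂ ω)) (g₃₁ (X₃ ω)))) Q :=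
  sum_rate_converse_bound_general μ Q X₁ X₂ X₃ g₁₁ g₁₂ g₁₃ g₂₁ g₂₂ g₂₃ g₃₁ g₃₂ g₃₃ h₁ h₂ h₃ f₁ f₂ f₃
    hindep hf₁ hf₂ hf₃ hinv₁ hstrong₂ hstrong₃
end
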